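/- Let J be a Jacobi field along a unit speed geodesic γ in a Riemannian manifold with all sectional curvatures bounded above by δ = -1/R² < 0. If J(0) = 0, J is normal to γ, and D_{γ̇}J(0) ≠ 0, then for all t > 0, |J(t)| ≥ R·sinh(t/R)·|D_{γ̇}J(0)|. In particular J(t) ≠ 0 for t > 0. -/

import Mathlib

open scoped RealInnerProductSpace

/-- Jacobi field comparison under curvature ≤ -1/R².  In a parallel trivialization of
the normal bundle along a unit speed geodesic `γ`, a Jacobi field `J` normal to `γ`
satisfies `J'' = -Rm(t)J`, where `Rm(t)v = R(v,γ̇)γ̇`; the sectional curvature bound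
`K ≤ -1/R²` on planes containing `γ̇` reads `⟪Rm(t)v, v⟫ ≤ -(1/R²)‖v‖²`.
If `J(0) = 0` and `D_{γ̇}J(0) = J'(0) ≠ 0`, then for all `t > 0`,
`‖J(t)‖ ≥ R·sinh(t/R)·‖J'(0)‖`, and in particular `J(t) ≠ 0`. -/
theorem jacobi_field_comparison (n : ℕ) (R : ℝ) (hR : 0 < R)
    (J : ℝ → EuclideanSpace ℝ (Fin n))
    (Rm : ℝ → EuclideanSpace ℝ (Fin n) →L[ℝ] EuclideanSpace ℝ (Fin n))
    (hJ : ContDiff ℝ (⊤ : ℕ∞) J)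
    (hJacobi : ∀ t, deriv (deriv J) t = -Rm t (J t))
    (hCurv : ∀ t (v : EuclideanSpace ℝ (Fin n)), ⟪Rm t v, v⟫ ≤ -(1 / R ^ 2) * ‖v‖ ^ 2)
    (hJ0 : J 0 = 0) (hJ'0 : deriv J 0 ≠ 0) :
    ∀ t > 0, ‖J t‖ ≥ R * Real.sinh (t / R) * ‖deriv J 0‖ ∧ J t ≠ 0 := by
  have hRne : R ≠ 0 := hR.ne'
  set v := deriv J 0 with hv
  set s : ℝ → ℝ := fun x => R * Real.sinh (x / R) with hsdef
  set c : ℝ → ℝ := fun x => Real.cosh (x / R) with hcdef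
  -- derivatives of s and c
  have hdiv : ∀ x : ℝ, HasDerivAt (fun y : ℝ => y / R) (1 / R) x := fun x => by
    simpa using (hasDerivAt_id x).div_const R
  have hs : ∀ x, HasDerivAt s (c x) x := by
    intro x
    have h1 := ((Real.hasDerivAt_sinh (x / R)).comp x (hdiv x)).const_mul R
    refine h1.congr_deriv ?_
    field_simp [hcdef]
    rfl
  have hc : ∀ x, HasDerivAt c (s x / R ^ 2) x := by
    intro x
    have h1 := (Real.hasDerivAt_cosh (x / R)).comp x (hdiv x)
    refine h1.congr_deriv ?_
    field_simp [hsdef]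
    ring
  -- derivatives of J
  have hJdiff : Differentiable ℝ J := hJ.differentiable (by simp)
  have hJ'diff : Differentiable ℝ (deriv J) := by
    have h : ContDiff ℝ (⊤ : ℕ∞) J := hJ.of_le (by simp)
    exact (contDiff_infty_iff_deriv.mp h).2.differentiable (by simp)
  have hdJ : ∀ x, HasDerivAt J (deriv J x) x := fun x => (hJdiff x).hasDerivAt
  have hdJ' : ∀ x, HasDerivAt (deriv J) (-Rm x (J x)) x := fun x =>
    hJacobi x ▸ (hJ'diff x).hasDerivAt
  set u : ℝ → ℝ := fun x => ⟪J x, J x⟫ with hudef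
  set w : ℝ → ℝ := fun x => ⟪J x, deriv J x⟫ with hwdef
  have hu_norm : ∀ x, u x = ‖J x‖ ^ 2 := fun x => real_inner_self_eq_norm_sq _
  have hu : ∀ x, HasDerivAt u (2 * w x) x := by
    intro x
    have h1 := (hdJ x).inner ℝ (hdJ x)
    refine h1.congr_deriv ?_
    simp only [hwdef]
    linarith [real_inner_comm (J x) (deriv J x)]
  have hw : ∀ x, HasDerivAt w (⟪deriv J x, deriv J x⟫ - ⟪Rm x (J x), J x⟫) x := by
    intro x
    have h1 := (hdJ x).inner ℝ (hdJ' x)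
    refine h1.congr_deriv ?_
    rw [inner_neg_right, real_inner_comm (Rm x (J x)) (J x)]
    ring
  set G : ℝ → ℝ := fun x => 2 * s x * w x - 2 * c x * u x with hGdef
  set G' : ℝ → ℝ := fun x =>
    (2 * c x * w x + 2 * s x * (⟪deriv J x, deriv J x⟫ - ⟪Rm x (J x), J x⟫)) -
      (2 * (s x / R ^ 2) * u x + 2 * c x * (2 * w x)) with hG'def
  have hG : ∀ x, HasDerivAt G (G' x) x := by
    intro x
    exact (((hs x).const_mul 2).mul (hw x)).sub (((hc x).const_mul 2).mul (hu x))
  -- key pointwise inequality : s G' - c G ≥ 0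
  have hkey : ∀ x, 0 ≤ s x * G' x - c x * G x := by
    intro x
    have hcs := hCurv x (J x)
    have hexp : ‖s x • deriv J x - c x • J x‖ ^ 2 =
        s x ^ 2 * ⟪deriv J x, deriv J x⟫ - 2 * (s x * c x) * w x + c x ^ 2 * u x := by
      rw [← real_inner_self_eq_norm_sq]
      simp only [inner_sub_left, inner_sub_right, real_inner_smul_left, real_inner_smul_right,
        real_inner_comm (deriv J x) (J x), hwdef, hudef]
      ring
    have h1 : (0:ℝ) ≤ ‖s x • deriv J x - c x • J x‖ ^ 2 := sq_nonneg _
    have hQ : s x ^ 2 * ⟪Rm x (J x), J x⟫ ≤ s x ^ 2 * (-(1 / R ^ 2) * ‖J x‖ ^ 2) :=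
      mul_le_mul_of_nonneg_left hcs (sq_nonneg _)
    have hT : s x * G' x - c x * G x
        = 2 * ‖s x • deriv J x - c x • J x‖ ^ 2
          + (-(2 * (s x ^ 2 * ⟪Rm x (J x), J x⟫)) - 2 * (s x ^ 2 * (1 / R ^ 2 * u x))) := by
      simp only [hG'def, hGdef]
      rw [hexp]
      ring
    rw [hT, hu_norm x]
    have h2 : 0 ≤ -(2 * (s x ^ 2 * ⟪Rm x (J x), J x⟫)) - 2 * (s x ^ 2 * (1 / R ^ 2 * ‖J x‖ ^ 2)) := by
      linarith [hQ]
    linarith [h1, h2]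
  have hspos : ∀ x > (0:ℝ), 0 < s x := fun x hx =>
    mul_pos hR (Real.sinh_pos_iff.mpr (div_pos hx hR))
  have hxle : ∀ x > (0:ℝ), x ≤ s x := by
    intro x hx
    have h1 : x / R < Real.sinh (x / R) := Real.self_lt_sinh_iff.mpr (div_pos hx hR)
    calc x = R * (x / R) := by field_simp
    _ ≤ R * Real.sinh (x / R) := by nlinarith
  -- φ = G/s is monotone on (0, ∞)
  have hφderiv : ∀ x > (0:ℝ), HasDerivAt (fun y => G y / s y)
      ((G' x * s x - G x * c x) / s x ^ 2) x := fun x hx =>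
    (hG x).div (hs x) (hspos x hx).ne'
  have hφmono : ∀ a b : ℝ, 0 < a → a < b → G a / s a ≤ G b / s b := by
    intro a b ha hab
    have hcont : ContinuousOn (fun y => G y / s y) (Set.Icc a b) := fun y hy =>
      ((hφderiv y (lt_of_lt_of_le ha hy.1)).differentiableAt).continuousAt.continuousWithinAt
    obtain ⟨ξ, hξ, heq⟩ := exists_hasDerivAt_eq_slope (fun y => G y / s y)
      (fun y => (G' y * s y - G y * c y) / s y ^ 2) hab hcont
      (fun y hy => hφderiv y (ha.trans hy.1))
    have hξpos : 0 < ξ := ha.trans hξ.1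
    have hnum : 0 ≤ G' ξ * s ξ - G ξ * c ξ := by have := hkey ξ; linarith
    have h0 : 0 ≤ (G b / s b - G a / s a) / (b - a) := heq ▸ div_nonneg hnum (sq_nonneg _)
    have hba : 0 < b - a := sub_pos.mpr hab
    have h5 := mul_nonneg h0 hba.le
    rw [div_mul_cancel₀ _ hba.ne'] at h5
    linarith
  -- G/s → 0 at 0+
  have hG0 : G 0 = 0 := by simp [hGdef, hudef, hwdef, hJ0]
  have hG'0 : G' 0 = 0 := by simp [hG'def, hsdef, hudef, hwdef, hJ0]
  have hslopeG : Filter.Tendsto (fun x => G x / x) (nhdsWithin 0 (Set.Ioi 0)) (nhds 0) := by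
    have h1 := hasDerivAt_iff_tendsto_slope.mp (hG 0)
    rw [hG'0] at h1
    have h2 : Filter.Tendsto (slope G 0) (nhdsWithin 0 (Set.Ioi 0)) (nhds 0) :=
      h1.mono_left (nhdsWithin_mono _ (fun x hx => ne_of_gt hx))
    refine h2.congr' ?_
    filter_upwards [self_mem_nhdsWithin] with x hx
    simp [slope, hG0, div_eq_inv_mul]
  have hφ0 : Filter.Tendsto (fun x => G x / s x) (nhdsWithin 0 (Set.Ioi 0)) (nhds 0) := by
    have habs := hslopeG.abs
    rw [abs_zero] at habs
    apply squeeze_zero_norm' _ habs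
    filter_upwards [self_mem_nhdsWithin] with x hx
    rw [Real.norm_eq_abs, abs_div, abs_div, abs_of_pos (hspos x hx), abs_of_pos (a := x) hx]
    exact div_le_div_of_nonneg_left (abs_nonneg _) hx (hxle x hx)
  -- G ≥ 0 on (0, ∞)
  have hGnonneg : ∀ x > (0:ℝ), 0 ≤ G x := by
    intro x hx
    have hle : 0 ≤ G x / s x := by
      refine le_of_tendsto hφ0 ?_
      filter_upwards [Ioo_mem_nhdsGT_of_mem ⟨le_refl 0, hx⟩] with ε hε
      exact hφmono ε x hε.1 hε.2
    have := (le_div_iff₀ (hspos x hx)).mp hle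
    simpa using this
  -- H = u / s² is monotone on (0,∞)
  have hH' : ∀ x > (0:ℝ), HasDerivAt (fun y => u y / s y ^ 2)
      ((2 * w x * s x ^ 2 - u x * (2 * s x ^ 1 * c x)) / (s x ^ 2) ^ 2) x := by
    intro x hx
    exact (hu x).div ((hs x).pow 2) (pow_ne_zero 2 (hspos x hx).ne')
  have hHnum : ∀ x > (0:ℝ), 0 ≤ (2 * w x * s x ^ 2 - u x * (2 * s x ^ 1 * c x)) / (s x ^ 2) ^ 2 := by
    intro x hx
    apply div_nonneg _ (by positivity)
    have h1 : 2 * w x * s x ^ 2 - u x * (2 * s x ^ 1 * c x) = s x * G x := by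
      simp only [hGdef]; ring
    rw [h1]
    exact mul_nonneg (hspos x hx).le (hGnonneg x hx)
  have hHmono : ∀ a b : ℝ, 0 < a → a < b → u a / s a ^ 2 ≤ u b / s b ^ 2 := by
    intro a b ha hab
    have hcont : ContinuousOn (fun y => u y / s y ^ 2) (Set.Icc a b) := fun y hy =>
      ((hH' y (lt_of_lt_of_le ha hy.1)).differentiableAt).continuousAt.continuousWithinAt
    obtain ⟨ξ, hξ, heq⟩ := exists_hasDerivAt_eq_slope (fun y => u y / s y ^ 2)
      (fun y => (2 * w y * s y ^ 2 - u y * (2 * s y ^ 1 * c y)) / (s y ^ 2) ^ 2) hab hcont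
      (fun y hy => hH' y (ha.trans hy.1))
    have h0 := hHnum ξ (ha.trans hξ.1)
    rw [heq] at h0
    have hba : 0 < b - a := sub_pos.mpr hab
    have h5 := mul_nonneg h0 hba.le
    rw [div_mul_cancel₀ _ hba.ne'] at h5
    linarith
  -- u / s² → ‖v‖² at 0+
  have hJslope : Filter.Tendsto (fun x => x⁻¹ • J x) (nhdsWithin 0 (Set.Ioi 0)) (nhds v) := by
    have h1 := hasDerivAt_iff_tendsto_slope.mp (hdJ 0)
    have h2 := h1.mono_left (nhdsWithin_mono _ (fun x (hx : x ∈ Set.Ioi 0) => ne_of_gt hx))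
    refine h2.congr' ?_
    filter_upwards [self_mem_nhdsWithin] with x hx
    simp [slope, hJ0]
  have hup : Filter.Tendsto (fun x => u x / x ^ 2) (nhdsWithin 0 (Set.Ioi 0)) (nhds ⟪v, v⟫) := by
    have h1 : Filter.Tendsto (fun x => ⟪x⁻¹ • J x, x⁻¹ • J x⟫)
        (nhdsWithin 0 (Set.Ioi 0)) (nhds ⟪v, v⟫) := hJslope.inner hJslope
    refine h1.congr' ?_
    filter_upwards [self_mem_nhdsWithin] with x hx
    rw [real_inner_smul_left, real_inner_smul_right]
    show x⁻¹ * (x⁻¹ * u x) = u x / x ^ 2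
    ring
  have hsp : Filter.Tendsto (fun x => s x / x) (nhdsWithin 0 (Set.Ioi 0)) (nhds 1) := by
    have h1 := hasDerivAt_iff_tendsto_slope.mp (hs 0)
    have hc0 : c 0 = 1 := by simp [hcdef]
    rw [hc0] at h1
    have h2 := h1.mono_left (nhdsWithin_mono _ (fun x (hx : x ∈ Set.Ioi 0) => ne_of_gt hx))
    refine h2.congr' ?_
    filter_upwards [self_mem_nhdsWithin] with x hx
    have hs0 : s 0 = 0 := by simp [hsdef]
    simp [slope, hs0, div_eq_inv_mul]
  have hHlim : Filter.Tendsto (fun x => u x / s x ^ 2) (nhdsWithin 0 (Set.Ioi 0))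
      (nhds ⟪v, v⟫) := by
    have h1 : Filter.Tendsto (fun x => (u x / x ^ 2) / (s x / x) ^ 2)
        (nhdsWithin 0 (Set.Ioi 0)) (nhds (⟪v, v⟫ / 1 ^ 2)) :=
      hup.div (hsp.pow 2) (by norm_num)
    rw [show ⟪v, v⟫ / 1 ^ 2 = ⟪v, v⟫ by norm_num] at h1
    refine h1.congr' ?_
    filter_upwards [self_mem_nhdsWithin] with x hx
    have hxne : x ≠ 0 := ne_of_gt hx
    have hsne : s x ≠ 0 := (hspos x hx).ne'
    field_simp
    try ring
  -- conclusion
  intro t ht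
  have hbound : ⟪v, v⟫ ≤ u t / s t ^ 2 := by
    refine le_of_tendsto hHlim ?_
    filter_upwards [Ioo_mem_nhdsGT_of_mem ⟨le_refl 0, ht⟩] with ε hε
    exact hHmono ε t hε.1 hε.2
  have hstpos := hspos t ht
  have hvv : ⟪v, v⟫ = ‖v‖ ^ 2 := real_inner_self_eq_norm_sq v
  have hsq : s t ^ 2 * ‖v‖ ^ 2 ≤ ‖J t‖ ^ 2 := by
    rw [← hu_norm t]
    rw [hvv] at hbound
    calc s t ^ 2 * ‖v‖ ^ 2 ≤ s t ^ 2 * (u t / s t ^ 2) :=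
          mul_le_mul_of_nonneg_left hbound (sq_nonneg _)
    _ = u t := by field_simp
  have hvpos : 0 < ‖v‖ := norm_pos_iff.mpr hJ'0
  have hmain : ‖J t‖ ≥ s t * ‖v‖ := by
    nlinarith [norm_nonneg (J t), mul_pos hstpos hvpos]
  refine ⟨hmain, ?_⟩
  intro hzero
  rw [hzero] at hmain
  simp at hmain
  nlinarith [mul_pos hstpos hvpos]
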